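/- arXiv:2105.05610 — 2 statements merged into one kernel-verified Lean document; each statement's English description precedes it below -/
import Mathlib

section
/- (Kullback-Leibler divergence between two Laplace distributions.) Let b0 > 0, b1 > 0 and let μ0, μ1 be real numbers. Let p0(z) = (1/(2b0))·exp(−|z − μ0|/b0) and p1(z) = (1/(2b1))·exp(−|z − μ1|/b1). Then D(p0‖p1) = ∫_{−∞}^{∞} p0(z) · ln( p0(z)/p1(z) ) dz = ln(b1/b0) − 1 + (b0/b1)·exp(−|μ1 − μ0|/b0) + |μ1 − μ0|/b1. -/
open MeasureTheory Real Set Filter Topology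


lemma hd_exp (b : ℝ) (hb : b ≠ 0) (x : ℝ) :
    HasDerivAt (fun z : ℝ => Real.exp (-z/b)) (-(1/b) * Real.exp (-x/b)) x := by
  have h1 : HasDerivAt (fun z : ℝ => -z/b) (-(1/b)) x := by
    simpa [neg_div, Pi.neg_def] using ((hasDerivAt_id x).div_const b).neg
  simpa [mul_comm, Function.comp_def] using (Real.hasDerivAt_exp (-x/b)).comp x h1

lemma hd_g (b a : ℝ) (hb : b ≠ 0) (x : ℝ) :
    HasDerivAt (fun z : ℝ => -(b*z - b*a + b^2) * Real.exp (-z/b))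
      ((x - a) * Real.exp (-x/b)) x := by
  have h1 : HasDerivAt (fun z : ℝ => -(b*z - b*a + b^2)) (-b) x := by
    simpa [Pi.neg_def] using (((hasDerivAt_id x).const_mul b).sub_const (b*a)).add_const (b^2) |>.neg
  have := h1.mul (hd_exp b hb x)
  refine HasDerivAt.congr_deriv this ?_
  field_simp
  ring

lemma hd_h (b d : ℝ) (hb : b ≠ 0) (x : ℝ) :
    HasDerivAt (fun z : ℝ => (b*z - b*d + b^2) * Real.exp (-z/b))
      ((d - x) * Real.exp (-x/b)) x := by
  have h1 : HasDerivAt (fun z : ℝ => (b*z - b*d + b^2)) b x := by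
    simpa using (((hasDerivAt_id x).const_mul b).sub_const (b*d)).add_const (b^2)
  have := h1.mul (hd_exp b hb x)
  refine HasDerivAt.congr_deriv this ?_
  field_simp
  ring

lemma tendsto_lin_exp (b c e : ℝ) (hb : 0 < b) :
    Tendsto (fun z : ℝ => (c * z + e) * Real.exp (-z/b)) atTop (𝓝 0) := by
  have hdiv : Tendsto (fun z : ℝ => z / b) atTop atTop :=
    tendsto_id.atTop_div_const hb
  have h1 : Tendsto (fun z : ℝ => (z/b) * Real.exp (-(z/b))) atTop (𝓝 0) := by
    have := (tendsto_pow_mul_exp_neg_atTop_nhds_zero 1).comp hdiv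
    simpa [Function.comp_def] using this
  have h2 : Tendsto (fun z : ℝ => Real.exp (-(z/b))) atTop (𝓝 0) :=
    tendsto_exp_neg_atTop_nhds_zero.comp hdiv
  have : Tendsto (fun z : ℝ => (c*b) * ((z/b) * Real.exp (-(z/b))) + e * Real.exp (-(z/b)))
      atTop (𝓝 ((c*b) * 0 + e * 0)) := ((h1.const_mul _).add (h2.const_mul _))
  simp only [mul_zero, add_zero] at this
  refine this.congr fun z => ?_
  have : -(z/b) = -z/b := by ring
  rw [this]
  field_simp

lemma intOn_exp (b a : ℝ) (hb : 0 < b) :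
    IntegrableOn (fun z : ℝ => Real.exp (-z/b)) (Ioi a) := by
  have := exp_neg_integrableOn_Ioi a (one_div_pos.mpr hb)
  refine this.congr_fun (fun x _ => ?_) measurableSet_Ioi
  congr 1; field_simp

lemma int_exp_Ioi (b a : ℝ) (hb : 0 < b) :
    ∫ z in Ioi a, Real.exp (-z/b) = b * Real.exp (-a/b) := by
  have hder : ∀ x ∈ Ici a, HasDerivAt (fun z : ℝ => -b * Real.exp (-z/b))
      (Real.exp (-x/b)) x := by
    intro x _
    have := (hd_exp b hb.ne' x).const_mul (-b)
    refine HasDerivAt.congr_deriv this ?_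
    field_simp
  have htend : Tendsto (fun z : ℝ => -b * Real.exp (-z/b)) atTop (𝓝 0) := by
    have := tendsto_lin_exp b 0 (-b) hb
    simpa using this
  have := integral_Ioi_of_hasDerivAt_of_nonneg' hder
    (fun x _ => (Real.exp_pos _).le) htend
  simpa using this

lemma intOn_lin (b a : ℝ) (hb : 0 < b) :
    IntegrableOn (fun z : ℝ => (z - a) * Real.exp (-z/b)) (Ioi a) := by
  have htend : Tendsto (fun z : ℝ => -(b*z - b*a + b^2) * Real.exp (-z/b)) atTop (𝓝 0) := by
    have := tendsto_lin_exp b (-b) (b*a - b^2) hb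
    refine this.congr fun z => ?_; ring_nf
  exact integrableOn_Ioi_deriv_of_nonneg' (fun x _ => hd_g b a hb.ne' x)
    (fun x hx => mul_nonneg (by linarith [hx.out]) (Real.exp_pos _).le) htend

lemma int_lin_Ioi (b a : ℝ) (hb : 0 < b) :
    ∫ z in Ioi a, (z - a) * Real.exp (-z/b) = b^2 * Real.exp (-a/b) := by
  have htend : Tendsto (fun z : ℝ => -(b*z - b*a + b^2) * Real.exp (-z/b)) atTop (𝓝 0) := by
    have := tendsto_lin_exp b (-b) (b*a - b^2) hb
    refine this.congr fun z => ?_; ring_nf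
  have := integral_Ioi_of_hasDerivAt_of_nonneg' (fun x _ => hd_g b a hb.ne' x)
    (fun x hx => mul_nonneg (by linarith [hx.out]) (Real.exp_pos _).le) htend
  rw [this]; ring

lemma intOn_comb (b d : ℝ) (hb : 0 < b) :
    IntegrableOn (fun z : ℝ => (z - 0) * Real.exp (-z/b) + d * Real.exp (-z/b)) (Ioi 0) :=
  (intOn_lin b 0 hb).add ((intOn_exp b 0 hb).const_mul d)

lemma int_comb (b d : ℝ) (hb : 0 < b) :
    ∫ z in Ioi 0, ((z - 0) * Real.exp (-z/b) + d * Real.exp (-z/b)) = b^2 + b*d := by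
  rw [integral_add (intOn_lin b 0 hb) ((intOn_exp b 0 hb).const_mul d),
    integral_const_mul, int_lin_Ioi b 0 hb, int_exp_Ioi b 0 hb]
  simp [zero_div]
  ring

lemma cont_f (b d : ℝ) : Continuous (fun z : ℝ => Real.exp (-|z|/b) * |z - d|) := by
  fun_prop

lemma intOn_abs_Ioi (b d : ℝ) (hb : 0 < b) (hd : 0 ≤ d) :
    IntegrableOn (fun z : ℝ => Real.exp (-|z|/b) * |z - d|) (Ioi 0) := by
  refine Integrable.mono (intOn_comb b d hb)
    ((cont_f b d).aestronglyMeasurable.restrict) ?_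
  rw [ae_restrict_iff' measurableSet_Ioi]
  refine ae_of_all _ fun z hz => ?_
  have hz' : (0:ℝ) < z := hz
  have h1 : |z| = z := abs_of_pos hz'
  have h2 : |z - d| ≤ z + d := by
    calc |z - d| ≤ |z| + |d| := abs_sub _ _
    _ = z + d := by rw [h1, abs_of_nonneg hd]
  have hl : ‖Real.exp (-|z|/b) * |z - d|‖ = Real.exp (-z/b) * |z - d| := by
    rw [Real.norm_eq_abs, abs_of_nonneg (by positivity), h1]
  have hr : ‖(z - 0) * Real.exp (-z/b) + d * Real.exp (-z/b)‖
      = (z - 0) * Real.exp (-z/b) + d * Real.exp (-z/b) := by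
    rw [Real.norm_eq_abs, abs_of_nonneg (add_nonneg (mul_nonneg (by linarith)
      (Real.exp_pos _).le) (mul_nonneg hd (Real.exp_pos _).le))]
  rw [hl, hr]
  calc Real.exp (-z/b) * |z - d| ≤ Real.exp (-z/b) * (z + d) :=
        mul_le_mul_of_nonneg_left h2 (Real.exp_pos _).le
  _ = (z - 0) * Real.exp (-z/b) + d * Real.exp (-z/b) := by ring

lemma int_abs_Ioi (b d : ℝ) (hb : 0 < b) (hd : 0 ≤ d) :
    ∫ z in Ioi 0, Real.exp (-|z|/b) * |z - d|
      = 2 * b^2 * Real.exp (-d/b) - b^2 + b*d := by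
  have hIoc : IntegrableOn (fun z : ℝ => Real.exp (-|z|/b) * |z - d|) (Ioc 0 d) :=
    (cont_f b d).integrableOn_Ioc
  have hIoi : IntegrableOn (fun z : ℝ => Real.exp (-|z|/b) * |z - d|) (Ioi d) :=
    (intOn_abs_Ioi b d hb hd).mono_set (Ioi_subset_Ioi hd)
  rw [← Ioc_union_Ioi_eq_Ioi hd,
    setIntegral_union (Ioc_disjoint_Ioi le_rfl) measurableSet_Ioi hIoc hIoi]
  have e1 : ∫ z in Ioc 0 d, Real.exp (-|z|/b) * |z - d|
      = b^2 * Real.exp (-d/b) - b^2 + b*d := by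
    rw [setIntegral_congr_fun measurableSet_Ioc
      (g := fun z => (d - z) * Real.exp (-z/b)) (fun z hz => by
        rw [abs_of_pos hz.1, abs_of_nonpos (by linarith [hz.2])]; ring)]
    rw [← intervalIntegral.integral_of_le hd,
      intervalIntegral.integral_eq_sub_of_hasDerivAt
        (fun x _ => hd_h b d hb.ne' x) (Continuous.intervalIntegrable (by fun_prop) _ _)]
    simp [zero_div]
    ring
  have e2 : ∫ z in Ioi d, Real.exp (-|z|/b) * |z - d| = b^2 * Real.exp (-d/b) := by
    rw [setIntegral_congr_fun measurableSet_Ioi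
      (g := fun z => (z - d) * Real.exp (-z/b)) (fun z hz => by
        have : (0:ℝ) < z := lt_of_le_of_lt hd hz
        rw [abs_of_pos this, abs_of_nonneg (by linarith [hz.out])]; ring)]
    exact int_lin_Ioi b d hb
  rw [e1, e2]; ring

lemma intOn_abs_Iic (b d : ℝ) (hb : 0 < b) (hd : 0 ≤ d) :
    IntegrableOn (fun z : ℝ => Real.exp (-|z|/b) * |z - d|) (Iic 0) := by
  have h1 : IntegrableOn (fun x : ℝ => Real.exp (-|(-x)|/b) * |(-x) - d|) (Ioi 0) := by
    refine (intOn_comb b d hb).congr_fun (fun x hx => ?_) measurableSet_Ioi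
    have hx' : (0:ℝ) < x := hx
    rw [abs_neg, abs_of_pos hx', abs_of_nonpos (by linarith)]
    ring
  have h2 : IntegrableOn (fun x : ℝ => Real.exp (-|(-x)|/b) * |(-x) - d|) (Ici 0) := by
    rwa [integrableOn_Ici_iff_integrableOn_Ioi]
  have A : MeasurableEmbedding (fun x : ℝ => -x) :=
    (Homeomorph.neg ℝ).isClosedEmbedding.measurableEmbedding
  have key := (MeasurePreserving.integrableOn_comp_preimage
    (Measure.measurePreserving_neg (volume : Measure ℝ)) A
    (f := fun z : ℝ => Real.exp (-|z|/b) * |z - d|) (s := Iic 0))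
  apply key.1
  have hs : (fun x : ℝ => -x) ⁻¹' (Iic 0) = Ici 0 := by ext x; simp
  rw [hs]
  exact h2

lemma integrableOn_Iic_of_neg {f : ℝ → ℝ} (h : IntegrableOn (fun x : ℝ => f (-x)) (Ici 0)) :
    IntegrableOn f (Iic 0) := by
  have A : MeasurableEmbedding (fun x : ℝ => -x) :=
    (Homeomorph.neg ℝ).isClosedEmbedding.measurableEmbedding
  have key := (MeasurePreserving.integrableOn_comp_preimage
    (Measure.measurePreserving_neg (volume : Measure ℝ)) A (f := f) (s := Iic 0))
  apply key.1
  have hs : (fun x : ℝ => -x) ⁻¹' (Iic 0) = Ici 0 := by ext x; simp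
  rw [hs]
  exact h

lemma int_abs_Iic (b d : ℝ) (hb : 0 < b) (hd : 0 ≤ d) :
    ∫ z in Iic 0, Real.exp (-|z|/b) * |z - d| = b^2 + b*d := by
  have h := integral_comp_neg_Ioi 0 (fun z : ℝ => Real.exp (-|z|/b) * |z - d|)
  rw [neg_zero] at h
  rw [← h]
  rw [setIntegral_congr_fun measurableSet_Ioi
    (g := fun z : ℝ => (z - 0) * Real.exp (-z/b) + d * Real.exp (-z/b)) (fun x hx => by
      have hx' : (0:ℝ) < x := hx
      rw [abs_neg, abs_of_pos hx', abs_of_nonpos (by linarith)]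
      ring)]
  exact int_comb b d hb

lemma key_nonneg (b d : ℝ) (hb : 0 < b) (hd : 0 ≤ d) :
    Integrable (fun z : ℝ => Real.exp (-|z|/b) * |z - d|) ∧
    ∫ z : ℝ, Real.exp (-|z|/b) * |z - d| = 2*b*d + 2*b^2 * Real.exp (-d/b) := by
  constructor
  · rw [← integrableOn_univ, ← Iic_union_Ioi (a := (0:ℝ))]
    exact (intOn_abs_Iic b d hb hd).union (intOn_abs_Ioi b d hb hd)
  · rw [← intervalIntegral.integral_Iic_add_Ioi (b := (0:ℝ)) (intOn_abs_Iic b d hb hd) (intOn_abs_Ioi b d hb hd),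
      int_abs_Iic b d hb hd, int_abs_Ioi b d hb hd]
    ring

lemma key (b d : ℝ) (hb : 0 < b) :
    Integrable (fun z : ℝ => Real.exp (-|z|/b) * |z - d|) ∧
    ∫ z : ℝ, Real.exp (-|z|/b) * |z - d| = 2*b*|d| + 2*b^2 * Real.exp (-|d|/b) := by
  rcases le_or_gt 0 d with hd | hd
  · rw [abs_of_nonneg hd]; exact key_nonneg b d hb hd
  · have h0 : 0 ≤ -d := by linarith
    have hk := key_nonneg b (-d) hb h0
    have hfun : ∀ x : ℝ, Real.exp (-|(-x)|/b) * |(-x) - (-d)| = Real.exp (-|x|/b) * |x - d| := by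
      intro x
      rw [abs_neg, show (-x) - (-d) = -(x - d) by ring, abs_neg]
    constructor
    · have := hk.1.comp_neg
      refine this.congr (ae_of_all _ fun x => ?_)
      exact hfun x
    · rw [abs_of_neg hd, ← hk.2,
        ← integral_neg_eq_self (fun x : ℝ => Real.exp (-|x|/b) * |x - (-d)|) volume]
      exact integral_congr_ae (ae_of_all _ fun x => (hfun x).symm)

lemma exp_key (b : ℝ) (hb : 0 < b) :
    Integrable (fun z : ℝ => Real.exp (-|z|/b)) ∧ ∫ z : ℝ, Real.exp (-|z|/b) = 2*b := by
  have hIoi : IntegrableOn (fun z : ℝ => Real.exp (-|z|/b)) (Ioi 0) :=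
    (intOn_exp b 0 hb).congr_fun (fun x hx => by rw [abs_of_pos hx]) measurableSet_Ioi
  have hIic : IntegrableOn (fun z : ℝ => Real.exp (-|z|/b)) (Iic 0) := by
    refine integrableOn_Iic_of_neg ?_
    rw [integrableOn_Ici_iff_integrableOn_Ioi]
    exact hIoi.congr_fun (fun x hx => by rw [abs_neg]) measurableSet_Ioi
  refine ⟨?_, ?_⟩
  · rw [← integrableOn_univ, ← Iic_union_Ioi (a := (0:ℝ))]
    exact hIic.union hIoi
  · have h := integral_comp_abs (f := fun x : ℝ => Real.exp (-x/b))
    rw [h, int_exp_Ioi b 0 hb]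
    norm_num

theorem kl_divergence_laplace (b0 b1 μ0 μ1 : ℝ) (hb0 : 0 < b0) (hb1 : 0 < b1) :
    ∫ z : ℝ,
        ((1 / (2 * b0)) * Real.exp (-|z - μ0| / b0)) *
          Real.log (((1 / (2 * b0)) * Real.exp (-|z - μ0| / b0))
            / ((1 / (2 * b1)) * Real.exp (-|z - μ1| / b1)))
      = Real.log (b1 / b0) - 1 + (b0 / b1) * Real.exp (-|μ1 - μ0| / b0)
          + |μ1 - μ0| / b1 := by
  set d : ℝ := μ1 - μ0 with hd
  set C : ℝ := Real.log (b1 / b0) with hC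
  -- pointwise rewriting of the integrand
  have hfun : ∀ z : ℝ,
      ((1 / (2 * b0)) * Real.exp (-|z - μ0| / b0)) *
        Real.log (((1 / (2 * b0)) * Real.exp (-|z - μ0| / b0))
          / ((1 / (2 * b1)) * Real.exp (-|z - μ1| / b1)))
      = (C / (2 * b0)) * Real.exp (-|z - μ0| / b0)
        + (1 / (2 * b0 * b1)) * (Real.exp (-|z - μ0| / b0) * |z - μ1|)
        - (1 / (2 * b0 * b0)) * (Real.exp (-|z - μ0| / b0) * |z - μ0|) := by
    intro z
    have h0 : (0:ℝ) < 1 / (2 * b0) := by positivity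
    have h1 : (0:ℝ) < 1 / (2 * b1) := by positivity
    rw [Real.log_div (by positivity) (by positivity),
      Real.log_mul h0.ne' (Real.exp_pos _).ne',
      Real.log_mul h1.ne' (Real.exp_pos _).ne',
      Real.log_exp, Real.log_exp]
    have hlog : Real.log (1 / (2 * b0)) - Real.log (1 / (2 * b1)) = C := by
      rw [hC, one_div, one_div, Real.log_inv, Real.log_inv,
        Real.log_div hb1.ne' hb0.ne',
        Real.log_mul (by norm_num : (2:ℝ) ≠ 0) hb0.ne',
        Real.log_mul (by norm_num : (2:ℝ) ≠ 0) hb1.ne']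
      ring
    rw [← hlog]
    field_simp
    ring
  simp only [hfun]
  have P1 : Integrable (fun z : ℝ => Real.exp (-|z - μ0| / b0)) :=
    (exp_key b0 hb0).1.comp_sub_right μ0
  have P2 : Integrable (fun z : ℝ => Real.exp (-|z - μ0| / b0) * |z - μ1|) := by
    have h := ((key b0 d hb0).1.comp_sub_right μ0)
    refine h.congr (ae_of_all _ fun z => ?_)
    simp only []
    rw [hd, show z - μ0 - (μ1 - μ0) = z - μ1 by ring]
  have P3 : Integrable (fun z : ℝ => Real.exp (-|z - μ0| / b0) * |z - μ0|) := by
    have h := ((key b0 0 hb0).1.comp_sub_right μ0)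
    refine h.congr (ae_of_all _ fun z => ?_)
    simp only [sub_zero]
  have V1 : ∫ z : ℝ, Real.exp (-|z - μ0| / b0) = 2 * b0 := by
    have h := integral_sub_right_eq_self (μ := volume)
      (fun y : ℝ => Real.exp (-|y| / b0)) μ0
    rw [h, (exp_key b0 hb0).2]
  have V2 : ∫ z : ℝ, Real.exp (-|z - μ0| / b0) * |z - μ1|
      = 2*b0*|d| + 2*b0^2 * Real.exp (-|d| / b0) := by
    have e : (fun z : ℝ => Real.exp (-|z - μ0| / b0) * |z - μ1|)
        = fun z : ℝ => Real.exp (-|z - μ0| / b0) * |z - μ0 - d| := by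
      funext z
      rw [hd, show z - μ0 - (μ1 - μ0) = z - μ1 by ring]
    rw [e]
    have h := integral_sub_right_eq_self (μ := volume)
      (fun y : ℝ => Real.exp (-|y| / b0) * |y - d|) μ0
    rw [h, (key b0 d hb0).2]
  have V3 : ∫ z : ℝ, Real.exp (-|z - μ0| / b0) * |z - μ0| = 2*b0^2 := by
    have e : (fun z : ℝ => Real.exp (-|z - μ0| / b0) * |z - μ0|)
        = fun z : ℝ => Real.exp (-|z - μ0| / b0) * |z - μ0 - 0| := by
      funext z; rw [sub_zero]
    rw [e]
    have h := integral_sub_right_eq_self (μ := volume)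
      (fun y : ℝ => Real.exp (-|y| / b0) * |y - 0|) μ0
    rw [h, (key b0 0 hb0).2]
    simp
  have hadd : Integrable (fun z : ℝ => C / (2 * b0) * Real.exp (-|z - μ0| / b0)
      + 1 / (2 * b0 * b1) * (Real.exp (-|z - μ0| / b0) * |z - μ1|)) volume :=
    (P1.const_mul _).add (P2.const_mul _)
  have hP1 : Integrable (fun z : ℝ => C / (2 * b0) * Real.exp (-|z - μ0| / b0)) volume :=
    P1.const_mul _
  have hP2 : Integrable (fun z : ℝ =>
      1 / (2 * b0 * b1) * (Real.exp (-|z - μ0| / b0) * |z - μ1|)) volume :=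
    P2.const_mul _
  rw [integral_sub hadd (P3.const_mul _),
    integral_add hP1 hP2,
    integral_const_mul, integral_const_mul, integral_const_mul, V1, V2, V3]
  field_simp
  ring
end

section
/- (KL divergence for the adversarial Laplace mechanism.) Let s > 0, ε > 0, θ ≥ 1, and let μ0, μ1 be real numbers with Δμ = μ1 − μ0. Let p0(z) = (ε/(2s))·exp(−ε|z − μ0|/s) and p1(z) = (ε/(2θs))·exp(−ε|z − μ1|/(θs)). Then D(p0‖p1) = ∫_{−∞}^{∞} p0(z) · ln( p0(z)/p1(z) ) dz = ln θ − 1 + (1/θ)·exp(−|Δμ|·ε/s) + |Δμ|·ε/(θs). -/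
open MeasureTheory Real Set Filter

lemma tendsto_exp_neg_mul (c : ℝ) (hc : 0 < c) :
    Tendsto (fun x : ℝ => Real.exp (-(c * x))) atTop (nhds 0) := by
  have h : Tendsto (fun x : ℝ => c * x) atTop atTop :=
    Tendsto.const_mul_atTop hc tendsto_id
  have h2 : Tendsto (fun x : ℝ => -(c * x)) atTop atBot := tendsto_neg_atBot_iff.mpr h
  exact Real.tendsto_exp_atBot.comp h2

lemma tendsto_mul_exp_neg_mul (c : ℝ) (hc : 0 < c) :
    Tendsto (fun x : ℝ => x * Real.exp (-(c * x))) atTop (nhds 0) := by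
  have h : Tendsto (fun x : ℝ => c * x) atTop atTop :=
    Tendsto.const_mul_atTop hc tendsto_id
  have h2 := (Real.tendsto_pow_mul_exp_neg_atTop_nhds_zero 1).comp h
  have h3 : Tendsto (fun x : ℝ => (1/c) * (((c*x))^1 * Real.exp (-(c*x)))) atTop
      (nhds ((1/c) * 0)) := h2.const_mul _
  rw [mul_zero] at h3
  refine h3.congr fun x => ?_
  field_simp

lemma hasDerivAt_exp_neg_mul (c x : ℝ) (hc : c ≠ 0) :
    HasDerivAt (fun x : ℝ => -Real.exp (-(c * x)) / c) (Real.exp (-(c * x))) x := by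
  have h1 : HasDerivAt (fun x : ℝ => -(c * x)) (-c) x := by
    simpa using ((hasDerivAt_id x).const_mul c).fun_neg
  have h2 := (Real.hasDerivAt_exp (-(c * x))).comp x h1
  have h3 := (h2.neg).div_const c
  refine h3.congr_deriv ?_
  field_simp

lemma integral_exp_neg_mul_Ioi (c t : ℝ) (hc : 0 < c) :
    ∫ x in Ioi t, Real.exp (-(c * x)) = Real.exp (-(c * t)) / c := by
  have := integral_Ioi_of_hasDerivAt_of_nonneg (g := fun x => -Real.exp (-(c * x)) / c)
    (g' := fun x => Real.exp (-(c * x))) (a := t) (l := 0)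
    (hasDerivAt_exp_neg_mul c t hc.ne').continuousAt.continuousWithinAt
    (fun x _ => hasDerivAt_exp_neg_mul c x hc.ne')
    (fun x _ => (Real.exp_pos _).le)
    (by simpa using ((tendsto_exp_neg_mul c hc).neg.div_const c))
  rw [this]; field_simp; ring

lemma integrableOn_exp_neg_mul_Ioi (c t : ℝ) (hc : 0 < c) :
    IntegrableOn (fun x => Real.exp (-(c * x))) (Ioi t) :=
  integrableOn_Ioi_deriv_of_nonneg (g := fun x => -Real.exp (-(c * x)) / c) (l := 0)
    (hasDerivAt_exp_neg_mul c t hc.ne').continuousAt.continuousWithinAt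
    (fun x _ => hasDerivAt_exp_neg_mul c x hc.ne')
    (fun x _ => (Real.exp_pos _).le)
    (by simpa using ((tendsto_exp_neg_mul c hc).neg.div_const c))

lemma hasDerivAt_mul_exp_neg_mul (c x : ℝ) (hc : c ≠ 0) :
    HasDerivAt (fun x : ℝ => -((x / c + 1 / c ^ 2) * Real.exp (-(c * x))))
      (x * Real.exp (-(c * x))) x := by
  have h1 : HasDerivAt (fun x : ℝ => -(c * x)) (-c) x := by
    simpa using ((hasDerivAt_id x).const_mul c).fun_neg
  have h2 := (Real.hasDerivAt_exp (-(c * x))).comp x h1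
  have h3 : HasDerivAt (fun x : ℝ => x / c + 1 / c ^ 2) (1 / c) x := by
    exact ((hasDerivAt_id x).div_const c).add_const (1 / c ^ 2)
  have h4 := (h3.mul h2).neg
  refine h4.congr_deriv ?_
  simp only [Function.comp_apply]
  field_simp
  ring

lemma tendsto_aux (c : ℝ) (hc : 0 < c) :
    Tendsto (fun x : ℝ => -((x / c + 1 / c ^ 2) * Real.exp (-(c * x)))) atTop (nhds 0) := by
  have h1 := (tendsto_mul_exp_neg_mul c hc).div_const c
  have h2 := (tendsto_exp_neg_mul c hc).const_mul (1 / c ^ 2)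
  have := ((h1.add h2).neg)
  simp only [zero_div, mul_zero, add_zero, neg_zero, zero_add] at this
  refine this.congr fun x => ?_
  ring

lemma integral_mul_exp_neg_mul_Ioi (c t : ℝ) (hc : 0 < c) (ht : 0 ≤ t) :
    ∫ x in Ioi t, x * Real.exp (-(c * x)) = (t / c + 1 / c ^ 2) * Real.exp (-(c * t)) := by
  have := integral_Ioi_of_hasDerivAt_of_nonneg
    (g := fun x => -((x / c + 1 / c ^ 2) * Real.exp (-(c * x))))
    (g' := fun x => x * Real.exp (-(c * x))) (a := t) (l := 0)
    (hasDerivAt_mul_exp_neg_mul c t hc.ne').continuousAt.continuousWithinAt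
    (fun x _ => hasDerivAt_mul_exp_neg_mul c x hc.ne')
    (fun x hx => mul_nonneg (ht.trans (le_of_lt hx)) (Real.exp_pos _).le)
    (tendsto_aux c hc)
  rw [this]; ring

lemma integrableOn_mul_exp_neg_mul_Ioi (c t : ℝ) (hc : 0 < c) (ht : 0 ≤ t) :
    IntegrableOn (fun x => x * Real.exp (-(c * x))) (Ioi t) :=
  integrableOn_Ioi_deriv_of_nonneg
    (g := fun x => -((x / c + 1 / c ^ 2) * Real.exp (-(c * x)))) (l := 0)
    (hasDerivAt_mul_exp_neg_mul c t hc.ne').continuousAt.continuousWithinAt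
    (fun x _ => hasDerivAt_mul_exp_neg_mul c x hc.ne')
    (fun x hx => mul_nonneg (ht.trans (le_of_lt hx)) (Real.exp_pos _).le)
    (tendsto_aux c hc)

lemma integrableOn_comp_neg_Iic' {f : ℝ → ℝ} (h : IntegrableOn f (Ici (0:ℝ))) :
    IntegrableOn (fun x => f (-x)) (Iic (0:ℝ)) := by
  have A : MeasurableEmbedding fun x : ℝ => -x :=
    (Homeomorph.neg ℝ).isClosedEmbedding.measurableEmbedding
  have h1 : (volume : Measure ℝ).restrict (Ici (0:ℝ)) =
      ((volume : Measure ℝ).restrict (Iic (0:ℝ))).map fun x : ℝ => -x := by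
    conv_lhs => rw [← Measure.map_neg_eq_self (volume : Measure ℝ)]
    rw [A.restrict_map]
    congr 1
    simp
  have h2 : Integrable f (((volume : Measure ℝ).restrict (Iic (0:ℝ))).map
      fun x : ℝ => -x) := by rwa [← h1]
  exact (A.integrable_map_iff.mp h2)

lemma integrable_exp_abs_mul (c a : ℝ) (hc : 0 < c) (ha : 0 ≤ a) :
    Integrable (fun z : ℝ => Real.exp (-(c * |z|)) * |z - a|) := by
  rw [← integrableOn_univ, ← Iic_union_Ioi (a := (0:ℝ))]
  have hIci : IntegrableOn (fun y : ℝ => Real.exp (-(c * |y|)) * |y + a|) (Ici (0:ℝ)) := by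
    rw [integrableOn_Ici_iff_integrableOn_Ioi]
    have h0 : IntegrableOn (fun x : ℝ => x * Real.exp (-(c * x)) + a * Real.exp (-(c * x)))
        (Ioi (0:ℝ)) := (integrableOn_mul_exp_neg_mul_Ioi c 0 hc le_rfl).add
      ((integrableOn_exp_neg_mul_Ioi c 0 hc).const_mul a)
    refine h0.congr_fun (fun x hx => ?_) measurableSet_Ioi
    have hx' : (0:ℝ) < x := hx
    rw [abs_of_pos hx', abs_of_pos (by linarith)]
    ring
  refine IntegrableOn.union ?_ ?_
  · refine (integrableOn_comp_neg_Iic' hIci).congr_fun (fun x _ => ?_) measurableSet_Iic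
    simp only [abs_neg]
    rw [show -x + a = -(x - a) by ring, abs_neg]
  · rw [← Ioc_union_Ioi_eq_Ioi ha]
    refine IntegrableOn.union ?_ ?_
    · have h0 : IntegrableOn (fun x : ℝ => a * Real.exp (-(c * x)) - x * Real.exp (-(c * x)))
          (Ioi (0:ℝ)) := ((integrableOn_exp_neg_mul_Ioi c 0 hc).const_mul a).sub
        (integrableOn_mul_exp_neg_mul_Ioi c 0 hc le_rfl)
      refine (h0.mono_set Ioc_subset_Ioi_self).congr_fun (fun x hx => ?_) measurableSet_Ioc
      rw [abs_of_pos hx.1, abs_of_nonpos (by linarith [hx.2] : x - a ≤ 0)]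
      ring
    · have h0 : IntegrableOn (fun x : ℝ => x * Real.exp (-(c * x)) - a * Real.exp (-(c * x)))
          (Ioi a) := (integrableOn_mul_exp_neg_mul_Ioi c a hc ha).sub
        ((integrableOn_exp_neg_mul_Ioi c a hc).const_mul a)
      refine h0.congr_fun (fun x hx => ?_) measurableSet_Ioi
      have hx' : a < x := hx
      rw [abs_of_pos (lt_of_le_of_lt ha hx'), abs_of_pos (by linarith : (0:ℝ) < x - a)]
      ring

lemma integral_exp_abs_mul (c a : ℝ) (hc : 0 < c) (ha : 0 ≤ a) :
    ∫ z : ℝ, Real.exp (-(c * |z|)) * |z - a|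
      = 2 * a / c + 2 * Real.exp (-(c * a)) / c ^ 2 := by
  have hInt := integrable_exp_abs_mul c a hc ha
  rw [← intervalIntegral.integral_Iic_add_Ioi (b := (0:ℝ)) hInt.integrableOn hInt.integrableOn]
  have hIic : ∫ x in Iic (0:ℝ), Real.exp (-(c * |x|)) * |x - a| = 1 / c ^ 2 + a / c := by
    have h1 : ∫ x in Iic (0:ℝ), Real.exp (-(c * |x|)) * |x - a|
        = ∫ x in Ioi (-(0:ℝ)), Real.exp (-(c * |x|)) * |x + a| := by
      rw [← integral_comp_neg_Iic]
      refine setIntegral_congr_fun measurableSet_Iic fun x _ => ?_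
      rw [abs_neg, show -x + a = -(x - a) by ring, abs_neg]
    rw [h1, neg_zero]
    have h2 : ∫ x in Ioi (0:ℝ), Real.exp (-(c * |x|)) * |x + a|
        = ∫ x in Ioi (0:ℝ), (x * Real.exp (-(c * x)) + a * Real.exp (-(c * x))) := by
      refine setIntegral_congr_fun measurableSet_Ioi fun x hx => ?_
      have hx' : (0:ℝ) < x := hx
      rw [abs_of_pos hx', abs_of_pos (by linarith)]
      ring
    rw [h2, integral_add (integrableOn_mul_exp_neg_mul_Ioi c 0 hc le_rfl)
      ((integrableOn_exp_neg_mul_Ioi c 0 hc).const_mul a),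
      integral_const_mul, integral_mul_exp_neg_mul_Ioi c 0 hc le_rfl,
      integral_exp_neg_mul_Ioi c 0 hc]
    simp [Real.exp_zero]
    ring
  have hIoiA : ∫ x in Ioi a, Real.exp (-(c * |x|)) * |x - a|
      = ∫ x in Ioi a, (x * Real.exp (-(c * x)) - a * Real.exp (-(c * x))) := by
    refine setIntegral_congr_fun measurableSet_Ioi fun x hx => ?_
    have hx' : a < x := hx
    rw [abs_of_pos (lt_of_le_of_lt ha hx'), abs_of_pos (by linarith : (0:ℝ) < x - a)]
    ring
  have hIoiAval : ∫ x in Ioi a, (x * Real.exp (-(c * x)) - a * Real.exp (-(c * x)))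
      = (a / c + 1 / c ^ 2) * Real.exp (-(c * a)) - a * (Real.exp (-(c * a)) / c) := by
    rw [integral_sub (integrableOn_mul_exp_neg_mul_Ioi c a hc ha)
      ((integrableOn_exp_neg_mul_Ioi c a hc).const_mul a),
      integral_const_mul, integral_mul_exp_neg_mul_Ioi c a hc ha,
      integral_exp_neg_mul_Ioi c a hc]
  -- split Ioi 0 at a for auxiliary function a*e - x*e
  have hsplit : ∫ x in Ioi (0:ℝ), (a * Real.exp (-(c * x)) - x * Real.exp (-(c * x)))
      = (∫ x in Ioc (0:ℝ) a, (a * Real.exp (-(c * x)) - x * Real.exp (-(c * x))))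
        + ∫ x in Ioi a, (a * Real.exp (-(c * x)) - x * Real.exp (-(c * x))) := by
    have h0 : IntegrableOn (fun x : ℝ => a * Real.exp (-(c * x)) - x * Real.exp (-(c * x)))
        (Ioi (0:ℝ)) := ((integrableOn_exp_neg_mul_Ioi c 0 hc).const_mul a).sub
      (integrableOn_mul_exp_neg_mul_Ioi c 0 hc le_rfl)
    rw [← Ioc_union_Ioi_eq_Ioi ha,
      setIntegral_union Ioc_disjoint_Ioi_same measurableSet_Ioi
        (h0.mono_set Ioc_subset_Ioi_self)
        (((integrableOn_exp_neg_mul_Ioi c a hc).const_mul a).sub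
          (integrableOn_mul_exp_neg_mul_Ioi c a hc ha))]
  have hIocval : ∫ x in Ioc (0:ℝ) a, (a * Real.exp (-(c * x)) - x * Real.exp (-(c * x)))
      = (a * (1 / c) - 1 / c ^ 2)
        - (a * (Real.exp (-(c * a)) / c) - (a / c + 1 / c ^ 2) * Real.exp (-(c * a))) := by
    have e0 : ∫ x in Ioi (0:ℝ), (a * Real.exp (-(c * x)) - x * Real.exp (-(c * x)))
        = a * (1 / c) - 1 / c ^ 2 := by
      rw [integral_sub ((integrableOn_exp_neg_mul_Ioi c 0 hc).const_mul a)
        (integrableOn_mul_exp_neg_mul_Ioi c 0 hc le_rfl),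
        integral_const_mul, integral_exp_neg_mul_Ioi c 0 hc,
        integral_mul_exp_neg_mul_Ioi c 0 hc le_rfl]
      simp [Real.exp_zero]
    have ea : ∫ x in Ioi a, (a * Real.exp (-(c * x)) - x * Real.exp (-(c * x)))
        = a * (Real.exp (-(c * a)) / c) - (a / c + 1 / c ^ 2) * Real.exp (-(c * a)) := by
      rw [integral_sub ((integrableOn_exp_neg_mul_Ioi c a hc).const_mul a)
        (integrableOn_mul_exp_neg_mul_Ioi c a hc ha),
        integral_const_mul, integral_exp_neg_mul_Ioi c a hc,
        integral_mul_exp_neg_mul_Ioi c a hc ha]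
    rw [e0, ea] at hsplit
    linarith
  have hIoc : ∫ x in Ioc (0:ℝ) a, Real.exp (-(c * |x|)) * |x - a|
      = ∫ x in Ioc (0:ℝ) a, (a * Real.exp (-(c * x)) - x * Real.exp (-(c * x))) := by
    refine setIntegral_congr_fun measurableSet_Ioc fun x hx => ?_
    rw [abs_of_pos hx.1, abs_of_nonpos (by linarith [hx.2] : x - a ≤ 0)]
    ring
  have hIoi0 : ∫ x in Ioi (0:ℝ), Real.exp (-(c * |x|)) * |x - a|
      = (∫ x in Ioc (0:ℝ) a, Real.exp (-(c * |x|)) * |x - a|)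
        + ∫ x in Ioi a, Real.exp (-(c * |x|)) * |x - a| := by
    rw [← Ioc_union_Ioi_eq_Ioi ha,
      setIntegral_union Ioc_disjoint_Ioi_same measurableSet_Ioi
        hInt.integrableOn hInt.integrableOn]
  rw [hIic, hIoi0, hIoc, hIocval, hIoiA, hIoiAval]
  field_simp
  ring

lemma integrable_exp_abs_mul' (c a : ℝ) (hc : 0 < c) :
    Integrable (fun z : ℝ => Real.exp (-(c * |z|)) * |z - a|) := by
  rcases le_or_gt 0 a with ha | ha
  · exact integrable_exp_abs_mul c a hc ha
  · have h := (integrable_exp_abs_mul c (-a) hc (by linarith)).comp_neg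
    refine h.congr (Filter.Eventually.of_forall fun z => ?_)
    simp only [abs_neg]
    rw [show -z - -a = -(z - a) by ring, abs_neg]

lemma integral_exp_abs_mul' (c a : ℝ) (hc : 0 < c) :
    ∫ z : ℝ, Real.exp (-(c * |z|)) * |z - a|
      = 2 * |a| / c + 2 * Real.exp (-(c * |a|)) / c ^ 2 := by
  rcases le_or_gt 0 a with ha | ha
  · rw [abs_of_nonneg ha]; exact integral_exp_abs_mul c a hc ha
  · rw [abs_of_neg ha]
    have h1 : (fun z : ℝ => Real.exp (-(c * |z|)) * |z - a|)
        = fun z : ℝ => Real.exp (-(c * |(-z)|)) * |(-z) - (-a)| := by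
      funext z
      simp only [abs_neg]
      rw [show -z - -a = -(z - a) by ring, abs_neg]
    rw [h1, integral_neg_eq_self (fun y : ℝ => Real.exp (-(c * |y|)) * |y - -a|) volume,
      integral_exp_abs_mul c (-a) hc (by linarith)]

lemma integrable_exp_abs (c : ℝ) (hc : 0 < c) :
    Integrable (fun z : ℝ => Real.exp (-(c * |z|))) := by
  rw [← integrableOn_univ, ← Iic_union_Ioi (a := (0:ℝ))]
  have hIci : IntegrableOn (fun y : ℝ => Real.exp (-(c * |y|))) (Ici (0:ℝ)) := by
    rw [integrableOn_Ici_iff_integrableOn_Ioi]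
    exact (integrableOn_exp_neg_mul_Ioi c 0 hc).congr_fun
      (fun x hx => by rw [abs_of_pos hx]) measurableSet_Ioi
  refine IntegrableOn.union ?_ (hIci.mono_set Ioi_subset_Ici_self)
  refine (integrableOn_comp_neg_Iic' hIci).congr_fun (fun x _ => ?_) measurableSet_Iic
  simp [abs_neg]

lemma integral_exp_abs (c : ℝ) (hc : 0 < c) :
    ∫ z : ℝ, Real.exp (-(c * |z|)) = 2 / c := by
  have hInt := integrable_exp_abs c hc
  rw [← intervalIntegral.integral_Iic_add_Ioi (b := (0:ℝ)) hInt.integrableOn hInt.integrableOn]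
  have h1 : ∫ x in Iic (0:ℝ), Real.exp (-(c * |x|))
      = ∫ x in Ioi (-(0:ℝ)), Real.exp (-(c * |x|)) := by
    rw [← integral_comp_neg_Iic]
    refine setIntegral_congr_fun measurableSet_Iic fun x _ => ?_
    rw [abs_neg]
  have h2 : ∫ x in Ioi (0:ℝ), Real.exp (-(c * |x|)) = 1 / c := by
    rw [show (∫ x in Ioi (0:ℝ), Real.exp (-(c * |x|)))
        = ∫ x in Ioi (0:ℝ), Real.exp (-(c * x)) from
      setIntegral_congr_fun measurableSet_Ioi fun x hx => by rw [abs_of_pos hx],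
      integral_exp_neg_mul_Ioi c 0 hc]
    simp
  rw [h1, neg_zero, h2]
  ring

theorem kl_divergence_laplace_mechanism (s ε θ μ0 μ1 : ℝ) (hs : 0 < s)
    (hε : 0 < ε) (hθ : 1 ≤ θ) :
    ∫ z : ℝ,
        ((ε / (2 * s)) * Real.exp (-(ε * |z - μ0|) / s)) *
          Real.log (((ε / (2 * s)) * Real.exp (-(ε * |z - μ0|) / s))
            / ((ε / (2 * θ * s)) * Real.exp (-(ε * |z - μ1|) / (θ * s))))
      = Real.log θ - 1 + (1 / θ) * Real.exp (-(|μ1 - μ0| * ε) / s)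
          + |μ1 - μ0| * ε / (θ * s) := by
  have hθ0 : 0 < θ := lt_of_lt_of_le one_pos hθ
  set c : ℝ := ε / s with hc_def
  set c' : ℝ := ε / (θ * s) with hc'_def
  set d : ℝ := μ1 - μ0 with hd_def
  have hc : 0 < c := by positivity
  have hA : (0:ℝ) < ε / (2 * s) := by positivity
  have hB : (0:ℝ) < ε / (2 * θ * s) := by positivity
  -- pointwise rewriting of the integrand
  have hpt : ∀ z : ℝ,
      ((ε / (2 * s)) * Real.exp (-(ε * |z - μ0|) / s)) *
        Real.log (((ε / (2 * s)) * Real.exp (-(ε * |z - μ0|) / s))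
          / ((ε / (2 * θ * s)) * Real.exp (-(ε * |z - μ1|) / (θ * s))))
      = (ε / (2 * s)) * Real.exp (-(c * |z - μ0|)) *
          (Real.log θ + c' * |z - μ1| - c * |z - μ0|) := by
    intro z
    have hlog : Real.log ((ε / (2 * s)) * Real.exp (-(ε * |z - μ0|) / s))
        - Real.log ((ε / (2 * θ * s)) * Real.exp (-(ε * |z - μ1|) / (θ * s)))
        = Real.log θ + c' * |z - μ1| - c * |z - μ0| := by
      rw [Real.log_mul hA.ne' (Real.exp_ne_zero _), Real.log_mul hB.ne' (Real.exp_ne_zero _),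
        Real.log_exp, Real.log_exp]
      have hAB : Real.log (ε / (2 * s)) - Real.log (ε / (2 * θ * s)) = Real.log θ := by
        rw [← Real.log_div hA.ne' hB.ne']
        congr 1
        field_simp
      have e1 : -(ε * |z - μ0|) / s = -(c * |z - μ0|) := by rw [hc_def]; ring
      have e2 : -(ε * |z - μ1|) / (θ * s) = -(c' * |z - μ1|) := by rw [hc'_def]; ring
      rw [e1, e2]
      linarith [hAB]
    rw [Real.log_div (by positivity) (by positivity), hlog,
      show -(ε * |z - μ0|) / s = -(c * |z - μ0|) from by rw [hc_def]; ring]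
  rw [show (fun z : ℝ =>
      ((ε / (2 * s)) * Real.exp (-(ε * |z - μ0|) / s)) *
        Real.log (((ε / (2 * s)) * Real.exp (-(ε * |z - μ0|) / s))
          / ((ε / (2 * θ * s)) * Real.exp (-(ε * |z - μ1|) / (θ * s)))))
      = fun z : ℝ => (ε / (2 * s)) * Real.exp (-(c * |z - μ0|)) *
          (Real.log θ + c' * |z - μ1| - c * |z - μ0|) from funext hpt]
  -- translate by μ0
  have htrans : (fun z : ℝ => (ε / (2 * s)) * Real.exp (-(c * |z - μ0|)) *
        (Real.log θ + c' * |z - μ1| - c * |z - μ0|))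
      = fun z : ℝ => (fun w : ℝ => (ε / (2 * s)) * Real.exp (-(c * |w|)) *
        (Real.log θ + c' * |w - d| - c * |w|)) (z - μ0) := by
    funext z
    simp only []
    rw [show z - μ0 - d = z - μ1 from by rw [hd_def]; ring]
  rw [htrans, integral_sub_right_eq_self (fun w : ℝ => (ε / (2 * s)) * Real.exp (-(c * |w|)) *
        (Real.log θ + c' * |w - d| - c * |w|)) μ0]
  -- split the integral into three pieces
  have hf1 := integrable_exp_abs c hc
  have hf2 := integrable_exp_abs_mul' c d hc
  have hf3 : Integrable (fun z : ℝ => Real.exp (-(c * |z|)) * |z|) := by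
    have := integrable_exp_abs_mul' c 0 hc
    simpa using this
  have hsplit : (fun w : ℝ => (ε / (2 * s)) * Real.exp (-(c * |w|)) *
        (Real.log θ + c' * |w - d| - c * |w|))
      = fun w : ℝ => ((ε / (2 * s)) * Real.log θ) * Real.exp (-(c * |w|))
          + (((ε / (2 * s)) * c') * (Real.exp (-(c * |w|)) * |w - d|)
            - ((ε / (2 * s)) * c) * (Real.exp (-(c * |w|)) * |w|)) := by
    funext w; ring
  have hg2 : Integrable (fun w : ℝ => ((ε / (2 * s)) * c') * (Real.exp (-(c * |w|)) * |w - d|)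
      - ((ε / (2 * s)) * c) * (Real.exp (-(c * |w|)) * |w|)) :=
    (hf2.const_mul _).sub (hf3.const_mul _)
  rw [hsplit, integral_add (hf1.const_mul _) hg2,
    integral_sub (hf2.const_mul _) (hf3.const_mul _),
    integral_const_mul, integral_const_mul, integral_const_mul,
    integral_exp_abs c hc, integral_exp_abs_mul' c d hc,
    show (∫ z : ℝ, Real.exp (-(c * |z|)) * |z|) = 2 * |(0:ℝ)| / c
        + 2 * Real.exp (-(c * |(0:ℝ)|)) / c ^ 2 from by
      rw [← integral_exp_abs_mul' c 0 hc]; simp]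
  have hE : -(c * |d|) = -(|μ1 - μ0| * ε) / s := by rw [hc_def, hd_def]; ring
  rw [hE]
  simp only [abs_zero, mul_zero, neg_zero, zero_div, zero_add, Real.exp_zero]
  rw [hc_def, hc'_def]
  field_simp
  rw [hd_def]
  ring
end
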